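/- Let B be a skew brace and I ⊴ B an ideal. Then G(I) = (I,+) ⋊_λ (I,∘) is a normal subgroup of the design group G(B) = (B,+) ⋊_λ (B,∘). Moreover, if J is a sub-skew-brace of B, then G(I)·G(J) = G(I + J). -/
import Mathlib


/-- A skew (left) brace: a type with an additive group structure `(B,+)` and a
multiplicative group structure `(B,∘)` (written `*`), satisfying the skew left
distributive law `a ∘ (b + c) = a ∘ b − a + a ∘ c`.  Addition is not assumed
commutative. -/
class SkewBrace (B : Type*) extends AddGroup B, Group B where
  skew_mul_add : ∀ a b c : B, a * (b + c) = a * b + -a + a * c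

namespace SkewBrace

variable {B : Type*} [SkewBrace B]

/-- `lam a x = −a + a ∘ x`, the lambda map of a skew brace. -/
def lam (a x : B) : B := -a + a * x

/-- The star operation `a ∗ b = λ_a(b) − b = −a + a ∘ b − b`. -/
def sstar (a b : B) : B := -a + a * b + -b

/-- A sub-skew-brace: a subset closed under both group operations and inverses. -/
def IsSubSkewBrace (C : Set B) : Prop :=
  (0 : B) ∈ C ∧ (∀ a ∈ C, ∀ b ∈ C, a + b ∈ C) ∧ (∀ a ∈ C, -a ∈ C) ∧
    (∀ a ∈ C, ∀ b ∈ C, a * b ∈ C) ∧ (∀ a ∈ C, a⁻¹ ∈ C)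

/-- A subgroup of the additive group `(B,+)`, as a subset. -/
def IsAddSubgroup (S : Set B) : Prop :=
  (0 : B) ∈ S ∧ (∀ a ∈ S, ∀ b ∈ S, a + b ∈ S) ∧ (∀ a ∈ S, -a ∈ S)

/-- A subgroup of the multiplicative group `(B,∘)`, as a subset. -/
def IsMulSubgroup (S : Set B) : Prop :=
  (1 : B) ∈ S ∧ (∀ a ∈ S, ∀ b ∈ S, a * b ∈ S) ∧ (∀ a ∈ S, a⁻¹ ∈ S)

/-- A strong left ideal: an additively normal, `λ`-invariant additive subgroup. -/
def IsStrongLeftIdeal (J : Set B) : Prop :=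
  IsAddSubgroup J ∧ (∀ b : B, ∀ j ∈ J, b + j + -b ∈ J) ∧ (∀ b : B, ∀ j ∈ J, lam b j ∈ J)

/-- An ideal: a sub-skew-brace which is additively normal, `λ`-invariant and
multiplicatively normal. -/
def IsIdeal (I : Set B) : Prop :=
  IsSubSkewBrace I ∧ (∀ b : B, ∀ a ∈ I, b + a + -b ∈ I) ∧
    (∀ b : B, ∀ a ∈ I, lam b a ∈ I) ∧ (∀ b : B, ∀ a ∈ I, b * a * b⁻¹ ∈ I)

/-- Multiplication of the design group `G(B) = (B,+) ⋊_λ (B,∘)`. -/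
def gmul (p q : B × B) : B × B := (p.1 + lam p.2 q.1, p.2 * q.2)

/-- Inversion in the design group `G(B)`. -/
def ginv (p : B × B) : B × B := (-(lam p.2⁻¹ p.1), p.2⁻¹)

/-- For a subset `I ⊆ B`, the subset `G(I) = I × I` of the design group. -/
def designSet (I : Set B) : Set (B × B) := {p | p.1 ∈ I ∧ p.2 ∈ I}

lemma sb_mul_zero (a : B) : a * 0 = a := by
  have h := skew_mul_add a 0 0
  rw [add_zero] at h
  nth_rewrite 1 [← zero_add (a * 0)] at h
  have h2 := add_right_cancel h
  exact (add_neg_eq_zero.mp h2.symm)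

lemma sb_one_eq_zero : (1 : B) = 0 := by
  have h := sb_mul_zero (1 : B)
  rw [one_mul] at h
  exact h.symm

lemma lam_add' (a x y : B) : lam a (x + y) = lam a x + lam a y := by
  simp only [lam, skew_mul_add a x y]
  simp [add_assoc]

lemma lam_zero' (a : B) : lam a 0 = 0 := by
  simp [lam, sb_mul_zero]

lemma lam_neg' (a x : B) : lam a (-x) = -(lam a x) := by
  have h : lam a x + lam a (-x) = 0 := by
    rw [← lam_add', add_neg_cancel, lam_zero']
  exact (neg_eq_of_add_eq_zero_right h).symm

lemma mul_as_add (a b : B) : a * b = a + lam a b := by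
  simp [lam, add_neg_cancel_left]

lemma lam_lam' (a b x : B) : lam a (lam b x) = lam (a * b) x := by
  have h1 : lam a (lam b x) = -(lam a b) + lam a (b * x) := by
    rw [show lam b x = -b + b * x from rfl, lam_add', lam_neg']
  rw [h1]
  simp only [lam, neg_add_rev, neg_neg, mul_assoc]
  rw [add_assoc, add_neg_cancel_left]

lemma lam_eq_sstar_add (a b : B) : lam a b = sstar a b + b := by
  simp [lam, sstar, add_assoc]

/-- Key lemma: `I ∗ B ⊆ I` for an ideal `I`. -/
lemma sstar_mem {I : Set B} (hI : IsIdeal I) {n : B} (hn : n ∈ I) (b : B) :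
    sstar n b ∈ I := by
  obtain ⟨⟨h0, hadd, hneg, hmul, hinv⟩, hAN, hlam, hMN⟩ := hI
  have hm : b⁻¹ * n * b ∈ I := by
    have := hMN b⁻¹ n hn
    rwa [inv_inv] at this
  have hbm : b + lam b (b⁻¹ * n * b) + -b ∈ I := hAN b _ (hlam b _ hm)
  have key : sstar n b = -n + (b + lam b (b⁻¹ * n * b) + -b) := by
    have hnb : n * b = b + lam b (b⁻¹ * n * b) := by
      rw [← mul_as_add, mul_assoc, mul_inv_cancel_left]
    rw [sstar, hnb]
    simp [add_assoc]
  rw [key]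
  exact hadd _ (hneg _ hn) _ hbm

/-- If `I` is an ideal of `B` then `G(I)` is a normal subgroup of the design
group `G(B)`; moreover for any sub-skew-brace `J`, `G(I)·G(J) = G(I + J)`. -/
theorem designSet_ideal_normal_and_prod (I J : Set B) (hI : IsIdeal I)
    (hJ : IsSubSkewBrace J) :
    (designSet I ≠ ∅ ∧
      (∀ p ∈ designSet I, ∀ q ∈ designSet I, gmul p q ∈ designSet I) ∧
      (∀ p ∈ designSet I, ginv p ∈ designSet I) ∧
      (∀ p : B × B, ∀ q ∈ designSet I, gmul (gmul p q) (ginv p) ∈ designSet I)) ∧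
    {r : B × B | ∃ p ∈ designSet I, ∃ q ∈ designSet J, r = gmul p q}
      = designSet {x : B | ∃ a ∈ I, ∃ b ∈ J, x = a + b} := by
  obtain ⟨⟨hI0, hIadd, hIneg, hImul, hIinv⟩, hAN, hlamI, hMN⟩ := hI
  obtain ⟨hJ0, hJadd, hJneg, hJmul, hJinv⟩ := hJ
  have hIideal : IsIdeal I := ⟨⟨hI0, hIadd, hIneg, hImul, hIinv⟩, hAN, hlamI, hMN⟩
  constructor
  · refine ⟨?_, ?_, ?_, ?_⟩
    · exact Set.nonempty_iff_ne_empty.mp ⟨(0, 0), hI0, hI0⟩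
    · rintro ⟨i, j⟩ ⟨hi, hj⟩ ⟨i', j'⟩ ⟨hi', hj'⟩
      exact ⟨hIadd _ hi _ (hlamI j _ hi'), hImul _ hj _ hj'⟩
    · rintro ⟨i, j⟩ ⟨hi, hj⟩
      exact ⟨hIneg _ (hlamI j⁻¹ _ hi), hIinv _ hj⟩
    · rintro ⟨b, c⟩ ⟨i, j⟩ ⟨hi, hj⟩
      have hn : c * j * c⁻¹ ∈ I := hMN c j hj
      refine ⟨?_, hn⟩
      show b + lam c i + lam (c * j) (-(lam c⁻¹ b)) ∈ I
      rw [lam_neg', lam_lam', mul_assoc]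
      rw [lam_eq_sstar_add (c * (j * c⁻¹)) b, neg_add_rev]
      rw [show b + lam c i + (-b + -(sstar (c * (j * c⁻¹)) b))
          = (b + lam c i + -b) + -(sstar (c * (j * c⁻¹)) b) by
        simp [add_assoc]]
      refine hIadd _ (hAN b _ (hlamI c _ hi)) _ (hIneg _ ?_)
      rw [← mul_assoc]
      exact sstar_mem hIideal hn b
  · ext ⟨x, y⟩
    simp only [Set.mem_setOf_eq, designSet, Prod.mk.injEq]
    constructor
    · rintro ⟨⟨i, i'⟩, ⟨hi, hi'⟩, ⟨j, j'⟩, ⟨hj, hj'⟩, hxy⟩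
      rw [Prod.ext_iff] at hxy
      obtain ⟨hx, hy⟩ := hxy
      simp only [gmul] at hx hy
      constructor
      · exact ⟨i + sstar i' j, hIadd _ hi _ (sstar_mem hIideal hi' j), j, hj,
          by rw [hx, lam_eq_sstar_add, add_assoc]⟩
      · exact ⟨i' + sstar i' j', hIadd _ hi' _ (sstar_mem hIideal hi' j'), j', hj',
          by rw [hy, mul_as_add, lam_eq_sstar_add, add_assoc]⟩
    · rintro ⟨⟨a, ha, b, hb, hx⟩, ⟨a', ha', b', hb', hy⟩⟩
      -- c := b' * (b'⁻¹ * (a' + b')) * b'⁻¹ ∈ I satisfies c * b' = a' + b' = y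
      have hd : b'⁻¹ * (a' + b') ∈ I := by
        have : b'⁻¹ * (a' + b') = b'⁻¹ + lam b'⁻¹ a' + -b'⁻¹ := by
          rw [skew_mul_add, inv_mul_cancel, sb_one_eq_zero, add_zero,
            mul_as_add b'⁻¹ a']
        rw [this]
        exact hAN b'⁻¹ _ (hlamI b'⁻¹ _ ha')
      set c : B := b' * (b'⁻¹ * (a' + b')) * b'⁻¹ with hc_def
      have hc : c ∈ I := hMN b' _ hd
      have hcb' : c * b' = y := by
        rw [hc_def, mul_assoc _ b'⁻¹ b', inv_mul_cancel, mul_one,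
          mul_inv_cancel_left, hy]
      -- i := (a + b) + -(lam c b) ∈ I
      have hi : (a + b) + -(lam c b) ∈ I := by
        have : (a + b) + -(lam c b) = a + -(sstar c b) := by
          rw [lam_eq_sstar_add, neg_add_rev]
          simp [add_assoc]
        rw [this]
        exact hIadd _ ha _ (hIneg _ (sstar_mem hIideal hc b))
      refine ⟨((a + b) + -(lam c b), c), ⟨hi, hc⟩, (b, b'), ⟨hb, hb'⟩, ?_⟩
      simp only [gmul, Prod.mk.injEq]
      exact ⟨by rw [hx, neg_add_cancel_right], hcb'.symm⟩


end SkewBrace
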